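/- arXiv:1606.04687 — 2 statements merged into one kernel-verified Lean document; each statement's English description precedes it below -/
import Mathlib

section
/- For every integers d₁ ≠ d₂ and every ε > 0 there exist C¹ maps f, g : 𝕊¹ → 𝕊¹ with deg f = d₁, deg g = d₂, and ∫_{𝕊¹}|f' - g'| ≤ 4|d₁ - d₂| + ε. Consequently the infimum of ∫_{𝕊¹}|f'-g'| over all such pairs equals 4|d₁-d₂|. -/
open Real

/-- `φ` is a `C¹` phase function representing the map `e^{iθ} ↦ e^{iφ(θ)}` of `𝕊¹` to itself,
of degree `d`. -/
def HasC1Degree (φ : ℝ → ℝ) (d : ℤ) : Prop :=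
  ContDiff ℝ 1 φ ∧ ∀ θ : ℝ, φ (θ + 2 * π) = φ θ + 2 * π * d

/-- The `W^{1,1}` distance `∫_{𝕊¹}|f' - g'|` between `f = e^{iφ}` and `g = e^{iψ}`. -/
noncomputable def dW11 (φ ψ : ℝ → ℝ) : ℝ :=
  ∫ θ in (0:ℝ)..(2 * π),
    ‖deriv (fun t : ℝ => Complex.exp (Complex.I * (φ t : ℂ))) θ -
      deriv (fun t : ℝ => Complex.exp (Complex.I * (ψ t : ℂ))) θ‖

/-!
Write `f = e^{iφ}`, `g = e^{iψ}` and `u = φ - ψ`. Pointwise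
`|f' - g'|² = ((φ' - ψ') cos (u / 2))² + ((φ' + ψ') sin (u / 2))²`, so
`∫ |f' - g'| ≥ |∫ u' |cos (u / 2)|| = |∫_{u 0}^{u 0 + 2π (d₁ - d₂)} |cos (s / 2)| ds| = 4 |d₁ - d₂|`.
The bound is attained when at each time either `φ + ψ` is stationary or `u ∈ 2πℤ`: let `u` wind
`d₁ - d₂` times during `[0, π]` while `φ + ψ` is frozen, then freeze `u` and let `φ + ψ` wind
`d₁ + d₂` times during `[π, 2π]`.
-/

open intervalIntegral

theorem periodic_abs_cos_half : Function.Periodic (fun s => |cos (s / 2)|) (2 * π) := by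
  intro s
  simp only [add_div, mul_div_cancel_left₀ π two_ne_zero, cos_add_pi, abs_neg]

theorem integral_abs_cos_half_add_two_pi (c : ℝ) : ∫ s in c..c + 2 * π, |cos (s / 2)| = 4 := by
  have hcos : ∀ s ∈ Set.uIcc (-π) π, |cos (s / 2)| = cos (s / 2) := by
    intro s hs
    rw [Set.uIcc_of_le (by linarith [pi_pos])] at hs
    exact abs_of_nonneg (cos_nonneg_of_mem_Icc ⟨by linarith [hs.1], by linarith [hs.2]⟩)
  rw [periodic_abs_cos_half.intervalIntegral_add_eq c (-π), show -π + 2 * π = π by ring,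
    integral_congr hcos, integral_comp_div _ two_ne_zero, integral_cos]
  simp only [neg_div, sin_neg, smul_eq_mul, sin_pi_div_two]
  norm_num

theorem integral_abs_cos_half_add_two_pi_mul (c : ℝ) (n : ℤ) :
    ∫ s in c..c + 2 * π * n, |cos (s / 2)| = 4 * n := by
  have h := periodic_abs_cos_half.intervalIntegral_add_zsmul_eq n c
    fun _ _ => (by fun_prop : Continuous fun s => |cos (s / 2)|).intervalIntegrable _ _
  rw [zsmul_eq_mul, mul_comm (n : ℝ), integral_abs_cos_half_add_two_pi, zsmul_eq_mul] at h
  rw [h, mul_comm]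

open Complex in
theorem norm_exp_mul_I_sub_exp_mul_I (a b p q : ℝ) :
    ‖exp (I * p) * (I * a) - exp (I * q) * (I * b)‖ =
      √(((a - b) * Real.cos ((p - q) / 2)) ^ 2 + ((a + b) * Real.sin ((p - q) / 2)) ^ 2) := by
  have hexp : ∀ t : ℝ, exp (I * t) = Real.cos t + Real.sin t * I := fun t => by
    rw [mul_comm, exp_mul_I, ofReal_cos, ofReal_sin]
  set x := (p + q) / 2
  set y := (p - q) / 2
  have hp : I * p = I * x + I * y := by push_cast [x, y]; ring
  have hq : I * q = I * x + I * (-y : ℝ) := by push_cast [x, y]; ring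
  have key : exp (I * p) * (I * a) - exp (I * q) * (I * b) =
      (I * exp (I * x)) * (((a - b) * Real.cos y : ℝ) + ((a + b) * Real.sin y : ℝ) * I) := by
    rw [hp, hq, Complex.exp_add, Complex.exp_add, hexp y, hexp (-y), Real.cos_neg, Real.sin_neg]
    push_cast
    ring
  rw [key, norm_mul, norm_mul, norm_I, norm_exp_I_mul_ofReal, norm_add_mul_I, one_mul, one_mul]

theorem hasDerivAt_cexp_I_mul {φ : ℝ → ℝ} {a θ : ℝ} (h : HasDerivAt φ a θ) :
    HasDerivAt (fun t : ℝ => Complex.exp (Complex.I * φ t))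
      (Complex.exp (Complex.I * φ θ) * (Complex.I * a)) θ := by
  simpa [mul_comm] using (h.ofReal_comp.const_mul Complex.I).cexp

theorem norm_deriv_cexp_I_mul_sub {φ ψ : ℝ → ℝ} {a b θ : ℝ} (hφ : HasDerivAt φ a θ)
    (hψ : HasDerivAt ψ b θ) :
    ‖deriv (fun t : ℝ => Complex.exp (Complex.I * φ t)) θ -
        deriv (fun t : ℝ => Complex.exp (Complex.I * ψ t)) θ‖ =
      √(((a - b) * cos ((φ θ - ψ θ) / 2)) ^ 2 + ((a + b) * sin ((φ θ - ψ θ) / 2)) ^ 2) := by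
  rw [(hasDerivAt_cexp_I_mul hφ).deriv, (hasDerivAt_cexp_I_mul hψ).deriv,
    norm_exp_mul_I_sub_exp_mul_I]

theorem continuous_deriv_cexp_I_mul {φ : ℝ → ℝ} (hφ : ContDiff ℝ 1 φ) :
    Continuous (deriv fun t : ℝ => Complex.exp (Complex.I * φ t)) :=
  ((contDiff_const.mul (Complex.ofRealCLM.contDiff.comp hφ)).cexp).continuous_deriv_one

theorem abs_integral_abs_cos_half_le {φ ψ : ℝ → ℝ} (hφ : ContDiff ℝ 1 φ) (hψ : ContDiff ℝ 1 ψ)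
    {a b : ℝ} (hab : a ≤ b) :
    |(∫ s in (φ a - ψ a)..(φ b - ψ b), |cos (s / 2)|)| ≤
      ∫ θ in a..b, ‖deriv (fun t : ℝ => Complex.exp (Complex.I * φ t)) θ -
        deriv (fun t : ℝ => Complex.exp (Complex.I * ψ t)) θ‖ := by
  have hφ' : ∀ x, HasDerivAt φ (deriv φ x) x := fun x =>
    ((hφ.differentiable one_ne_zero) x).hasDerivAt
  have hψ' : ∀ x, HasDerivAt ψ (deriv ψ x) x := fun x =>
    ((hψ.differentiable one_ne_zero) x).hasDerivAt
  have hu' : Continuous fun x => deriv φ x - deriv ψ x :=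
    hφ.continuous_deriv_one.sub hψ.continuous_deriv_one
  have hg : Continuous fun s : ℝ => |cos (s / 2)| := by fun_prop
  rw [← integral_comp_mul_deriv (f := fun θ => φ θ - ψ θ) (fun x _ => (hφ' x).sub (hψ' x))
    hu'.continuousOn hg]
  refine (abs_integral_le_integral_abs hab).trans (integral_mono_on hab ?_ ?_ fun θ _ => ?_)
  · exact ((hg.comp (hφ.continuous.sub hψ.continuous)).mul hu').abs.intervalIntegrable _ _
  · exact ((continuous_deriv_cexp_I_mul hφ).sub
      (continuous_deriv_cexp_I_mul hψ)).norm.intervalIntegrable _ _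
  · rw [norm_deriv_cexp_I_mul_sub (hφ' θ) (hψ' θ)]
    refine abs_le_sqrt (le_add_of_le_of_nonneg (le_of_eq ?_) (sq_nonneg _))
    simp only [Function.comp, mul_pow, sq_abs]
    ring

theorem four_mul_abs_sub_le_dW11 {φ ψ : ℝ → ℝ} {d₁ d₂ : ℤ} (hφ : HasC1Degree φ d₁)
    (hψ : HasC1Degree ψ d₂) : 4 * |(d₁ : ℝ) - d₂| ≤ dW11 φ ψ := by
  have h2π : φ (2 * π) - ψ (2 * π) = (φ 0 - ψ 0) + 2 * π * ((d₁ - d₂ : ℤ) : ℝ) := by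
    have h₁ := hφ.2 0
    have h₂ := hψ.2 0
    rw [zero_add] at h₁ h₂
    push_cast
    linarith
  have h := abs_integral_abs_cos_half_le hφ.1 hψ.1 (by positivity : (0 : ℝ) ≤ 2 * π)
  rwa [h2π, integral_abs_cos_half_add_two_pi_mul, abs_mul, Int.cast_sub, abs_of_pos four_pos] at h

noncomputable def stepRate (t : ℝ) : ℝ := π * max (sin t) 0

noncomputable def stepPhase (θ : ℝ) : ℝ := ∫ t in (0 : ℝ)..θ, stepRate t

theorem continuous_stepRate : Continuous stepRate := by
  unfold stepRate
  fun_prop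

theorem stepRate_nonneg (t : ℝ) : 0 ≤ stepRate t := mul_nonneg pi_pos.le (le_max_right _ _)

theorem stepRate_eq_zero {t : ℝ} (ht : t ∈ Set.Icc π (2 * π)) : stepRate t = 0 := by
  rw [stepRate, max_eq_right, mul_zero]
  rw [← sin_sub_two_pi]
  exact sin_nonpos_of_nonpos_of_neg_pi_le (by linarith [ht.2]) (by linarith [ht.1])

theorem hasDerivAt_stepPhase (θ : ℝ) : HasDerivAt stepPhase (stepRate θ) θ :=
  integral_hasDerivAt_right (continuous_stepRate.intervalIntegrable _ _)
    continuous_stepRate.aestronglyMeasurable.stronglyMeasurableAtFilter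
    continuous_stepRate.continuousAt

theorem stepPhase_eq_two_pi {θ : ℝ} (hθ : θ ∈ Set.Icc π (2 * π)) : stepPhase θ = 2 * π := by
  have hupper : ∫ t in (0 : ℝ)..π, stepRate t = 2 * π := by
    have hsin : Set.EqOn stepRate (fun t => π * sin t) (Set.uIcc 0 π) := fun t ht => by
      rw [Set.uIcc_of_le pi_pos.le] at ht
      simp only [stepRate, max_eq_left (sin_nonneg_of_mem_Icc ht)]
    rw [integral_congr hsin, integral_const_mul, integral_sin, cos_zero, cos_pi]
    ring
  have hlower : ∫ t in π..θ, stepRate t = 0 := by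
    have hzero : Set.EqOn stepRate 0 (Set.uIcc π θ) := fun t ht => by
      rw [Set.uIcc_of_le hθ.1] at ht
      exact stepRate_eq_zero ⟨ht.1, ht.2.trans hθ.2⟩
    rw [integral_congr hzero, Pi.zero_def, integral_zero]
  rw [stepPhase, ← integral_add_adjacent_intervals (b := π)
    (continuous_stepRate.intervalIntegrable _ _) (continuous_stepRate.intervalIntegrable _ _),
    hupper, hlower, add_zero]

theorem hasC1Degree_stepPhase : HasC1Degree stepPhase 1 := by
  refine ⟨contDiff_one_iff_deriv.2 ⟨fun θ => (hasDerivAt_stepPhase θ).differentiableAt, ?_⟩,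
    fun θ => ?_⟩
  · simpa only [funext fun θ => (hasDerivAt_stepPhase θ).deriv] using continuous_stepRate
  · have hperiodic : Function.Periodic stepRate (2 * π) := fun t => by
      simp only [stepRate, sin_add_two_pi]
    have h := hperiodic.intervalIntegral_add_eq_add 0 θ
      fun _ _ => continuous_stepRate.intervalIntegrable _ _
    rw [zero_add] at h
    change stepPhase (θ + 2 * π) = stepPhase θ + stepPhase (2 * π) at h
    rw [h, stepPhase_eq_two_pi ⟨by linarith [pi_pos], le_rfl⟩, Int.cast_one, mul_one]

noncomputable def twistPhase (a b θ : ℝ) : ℝ := a * stepPhase θ + b * stepPhase (θ + π)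

theorem hasDerivAt_twistPhase (a b θ : ℝ) :
    HasDerivAt (twistPhase a b) (a * stepRate θ + b * stepRate (θ + π)) θ :=
  ((hasDerivAt_stepPhase θ).const_mul a).add
    (((hasDerivAt_stepPhase (θ + π)).comp_add_const θ π).const_mul b)

theorem hasC1Degree_twistPhase {a b : ℝ} {d : ℤ} (h : a + b = d) :
    HasC1Degree (twistPhase a b) d := by
  obtain ⟨hsmooth, hperiod⟩ := hasC1Degree_stepPhase
  refine ⟨(contDiff_const.mul hsmooth).add
    (contDiff_const.mul (hsmooth.comp (contDiff_id.add contDiff_const))), fun θ => ?_⟩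
  simp only [twistPhase, Int.cast_one, mul_one] at hperiod ⊢
  rw [add_right_comm, hperiod, hperiod, ← h]
  ring

theorem twistPhase_sub_twistPhase (n : ℤ) (s θ : ℝ) :
    twistPhase (n / 2) s θ - twistPhase (-(n / 2)) s θ = n * stepPhase θ := by
  simp only [twistPhase]
  ring

theorem stepRate_add_pi_mul_sin_eq_zero (n : ℤ) {θ : ℝ} (hθ : θ ∈ Set.Icc 0 (2 * π)) :
    stepRate (θ + π) * sin (n * stepPhase θ / 2) = 0 := by
  rcases le_total θ π with hle | hge
  · rw [stepRate_eq_zero ⟨by linarith [hθ.1], by linarith⟩, zero_mul]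
  · rw [stepPhase_eq_two_pi ⟨hge, hθ.2⟩, show (n : ℝ) * (2 * π) / 2 = n * π by ring,
      sin_int_mul_pi, mul_zero]

theorem norm_deriv_cexp_twistPhase_sub (n : ℤ) (s : ℝ) {θ : ℝ} (hθ : θ ∈ Set.Icc 0 (2 * π)) :
    ‖deriv (fun t : ℝ => Complex.exp (Complex.I * twistPhase (n / 2) s t)) θ -
        deriv (fun t : ℝ => Complex.exp (Complex.I * twistPhase (-(n / 2)) s t)) θ‖ =
      |cos (|(n : ℝ)| * stepPhase θ / 2)| * (|(n : ℝ)| * stepRate θ) := by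
  have hsum : ((n / 2 * stepRate θ + s * stepRate (θ + π)) +
      (-(n / 2) * stepRate θ + s * stepRate (θ + π))) *
        sin ((twistPhase (n / 2) s θ - twistPhase (-(n / 2)) s θ) / 2) = 0 := by
    rw [twistPhase_sub_twistPhase]
    linear_combination (2 * s) * stepRate_add_pi_mul_sin_eq_zero n hθ
  have hcos : |cos (n * stepPhase θ / 2)| = |cos (|(n : ℝ)| * stepPhase θ / 2)| := by
    rcases abs_choice (n : ℝ) with h | h <;> rw [h]
    rw [neg_mul, neg_div, cos_neg]
  rw [norm_deriv_cexp_I_mul_sub (hasDerivAt_twistPhase _ _ θ) (hasDerivAt_twistPhase _ _ θ),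
    hsum, zero_pow two_ne_zero, add_zero, sqrt_sq_eq_abs, twistPhase_sub_twistPhase, abs_mul,
    hcos, show ∀ x y : ℝ, n / 2 * x + y - (-(n / 2) * x + y) = n * x by intros; ring, abs_mul,
    abs_of_nonneg (stepRate_nonneg θ)]
  ring

theorem dW11_twistPhase (n : ℤ) (s : ℝ) :
    dW11 (twistPhase (n / 2) s) (twistPhase (-(n / 2)) s) = 4 * |(n : ℝ)| := by
  have hend : |(n : ℝ)| * stepPhase (2 * π) = 0 + 2 * π * ((|n| : ℤ) : ℝ) := by
    rw [stepPhase_eq_two_pi ⟨by linarith [pi_pos], le_rfl⟩, Int.cast_abs]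
    ring
  have hintegrand : Set.EqOn _ (fun θ => ((fun x => |cos (x / 2)|) ∘
      fun t => |(n : ℝ)| * stepPhase t) θ * (|(n : ℝ)| * stepRate θ)) (Set.uIcc 0 (2 * π)) :=
    fun θ hθ => norm_deriv_cexp_twistPhase_sub n s
      (by rwa [Set.uIcc_of_le (by positivity)] at hθ)
  rw [dW11, integral_congr hintegrand,
    integral_comp_mul_deriv (fun θ _ => (hasDerivAt_stepPhase θ).const_mul _)
      (continuous_stepRate.const_mul _).continuousOn (by fun_prop),
    stepPhase, integral_same, mul_zero, hend, integral_abs_cos_half_add_two_pi_mul, Int.cast_abs]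

theorem stmt3_general (d₁ d₂ : ℤ) :
    (∀ ε : ℝ, 0 < ε → ∃ φ ψ : ℝ → ℝ, HasC1Degree φ d₁ ∧ HasC1Degree ψ d₂ ∧
      dW11 φ ψ ≤ 4 * |(d₁ : ℝ) - (d₂ : ℝ)| + ε) ∧
    sInf {x : ℝ | ∃ φ ψ : ℝ → ℝ, HasC1Degree φ d₁ ∧ HasC1Degree ψ d₂ ∧ x = dW11 φ ψ} =
      4 * |(d₁ : ℝ) - (d₂ : ℝ)| := by
  have hmin : IsLeast {x : ℝ | ∃ φ ψ : ℝ → ℝ, HasC1Degree φ d₁ ∧ HasC1Degree ψ d₂ ∧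
      x = dW11 φ ψ} (4 * |(d₁ : ℝ) - (d₂ : ℝ)|) := by
    refine ⟨⟨twistPhase (((d₁ - d₂ : ℤ) : ℝ) / 2) ((d₁ + d₂) / 2),
      twistPhase (-(((d₁ - d₂ : ℤ) : ℝ) / 2)) ((d₁ + d₂) / 2),
      hasC1Degree_twistPhase (by push_cast; ring), hasC1Degree_twistPhase (by push_cast; ring),
      by rw [dW11_twistPhase, Int.cast_sub]⟩, ?_⟩
    rintro x ⟨φ, ψ, hφ, hψ, rfl⟩
    exact four_mul_abs_sub_le_dW11 hφ hψ
  obtain ⟨φ, ψ, hφ, hψ, hdist⟩ := hmin.1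
  exact ⟨fun ε hε => ⟨φ, ψ, hφ, hψ, by linarith⟩, hmin.csInf_eq⟩

/-- For all `d₁ ≠ d₂` and `ε > 0` there exist `C¹` maps `f, g : 𝕊¹ → 𝕊¹` of degrees `d₁, d₂`
with `∫ |f' - g'| ≤ 4|d₁ - d₂| + ε`; consequently the infimum of `∫|f'-g'|` over all such
pairs equals `4|d₁ - d₂|`. -/
theorem stmt3 (d₁ d₂ : ℤ) (hne : d₁ ≠ d₂) :
    (∀ ε : ℝ, 0 < ε → ∃ φ ψ : ℝ → ℝ, HasC1Degree φ d₁ ∧ HasC1Degree ψ d₂ ∧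
      dW11 φ ψ ≤ 4 * |(d₁ : ℝ) - (d₂ : ℝ)| + ε) ∧
    sInf {x : ℝ | ∃ φ ψ : ℝ → ℝ, HasC1Degree φ d₁ ∧ HasC1Degree ψ d₂ ∧ x = dW11 φ ψ} =
      4 * |(d₁ : ℝ) - (d₂ : ℝ)| :=
  stmt3_general d₁ d₂
end

section
/- Let N ≥ 1, s > 0, 1 ≤ p < ∞ with sp > N (or s = N, p = 1), and let C be the constant of the embedding ‖h - avg(h)‖_{L^∞} ≤ C|h|_{W^{s,p}}. Then for any f, g ∈ W^{s,p}(𝕊^N;𝕊^N) with deg f ≠ deg g, one has |f - g|_{W^{s,p}} ≥ 1/C. -/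
/-!
Put `ρ := C r`. If `r < 1/C` then `ρ < 1`, and every value `f x - g x` lies within `ρ` of the
average `A`. If `‖A‖ > ρ`, then `f` misses the point `-A/‖A‖` and `g` misses `A/‖A‖`, so both
degrees vanish. Otherwise `‖f x - g x‖ ≤ 2ρ < 2`, so `f x` and `g x` are never antipodal and the
normalised straight-line homotopy joins `f` to `g`. Either way `deg f = deg g`.
-/

/-- The unit sphere `𝕊^N ⊂ ℝ^{N+1}`. -/
abbrev Sph (N : ℕ) := Metric.sphere (0 : EuclideanSpace ℝ (Fin (N + 1))) 1

open Metric

section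
variable {E : Type*} [NormedAddCommGroup E] [NormedSpace ℝ E]

theorem sub_smul_add_smul_ne_zero_of_ne_neg {u v : E} (hu : ‖u‖ = 1) (hv : ‖v‖ = 1)
    (huv : u ≠ -v) (t : ℝ) : (1 - t) • u + t • v ≠ 0 := by
  intro h
  have habs : |1 - t| = |t| := by
    simpa [norm_smul, hu, hv] using congrArg norm (eq_neg_of_add_eq_zero_left h)
  have ht : t = 1 / 2 := by
    rcases abs_eq_abs.mp habs with h' | h' <;> linarith
  subst ht
  have hsum : u + v = 0 := by
    have h2 := congrArg ((2 : ℝ) • ·) h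
    norm_num [smul_add, smul_smul] at h2
    exact h2
  exact huv (eq_neg_of_add_eq_zero_left hsum)

theorem ContinuousMap.homotopic_of_forall_ne_neg {X : Type*} [TopologicalSpace X]
    (f g : C(X, sphere (0 : E) 1)) (hfg : ∀ x, (f x : E) ≠ -(g x : E)) : f.Homotopic g := by
  set v : unitInterval × X → E := fun p => (1 - (p.1 : ℝ)) • (f p.2 : E) + (p.1 : ℝ) • (g p.2 : E)
  have hv : ∀ p, v p ≠ 0 := fun p =>
    sub_smul_add_smul_ne_zero_of_ne_neg (norm_eq_of_mem_sphere (f p.2))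
      (norm_eq_of_mem_sphere (g p.2)) (hfg p.2) p.1
  have hv_cont : Continuous v := by fun_prop
  have hv_norm : ∀ p, ‖v p‖ ≠ 0 := fun p => norm_ne_zero_iff.mpr (hv p)
  exact ⟨{
    toFun p := ⟨‖v p‖⁻¹ • v p, by simp [norm_smul, hv_norm p]⟩
    continuous_toFun := by
      apply Continuous.subtype_mk
      exact (hv_cont.norm.inv₀ hv_norm).smul hv_cont
    map_zero_left x := by ext1; simp [v, norm_eq_of_mem_sphere (f x)]
    map_one_left x := by ext1; simp [v, norm_eq_of_mem_sphere (g x)] }⟩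

theorem not_surjective_of_forall_norm_sub_lt {X : Type*} (f : X → sphere (0 : E) 1) {A : E}
    (hA : A ≠ 0) (hf : ∀ x, ‖(f x : E) - A‖ < 1 + ‖A‖) : ¬ Function.Surjective f := by
  have hA' : ‖A‖ ≠ 0 := norm_ne_zero_iff.mpr hA
  intro hsurj
  obtain ⟨x, hx⟩ := hsurj ⟨-(‖A‖⁻¹ • A), by simp [norm_smul, inv_mul_cancel₀ hA']⟩
  have hfar : ‖-(‖A‖⁻¹ • A) - A‖ = 1 + ‖A‖ := by
    rw [show -(‖A‖⁻¹ • A) - A = -((‖A‖⁻¹ + 1) • A) by module, norm_neg, norm_smul,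
      Real.norm_of_nonneg (by positivity), add_mul, inv_mul_cancel₀ hA', one_mul]
  exact (hf x).ne (by rw [hx, hfar])

theorem not_surjective_and_not_surjective_or_homotopic {X : Type*} [TopologicalSpace X]
    (f g : C(X, sphere (0 : E) 1)) (A : E) {ρ : ℝ} (hρ₀ : 0 ≤ ρ) (hρ₁ : ρ < 1)
    (hfg : ∀ x, ‖(f x : E) - g x - A‖ ≤ ρ) :
    (¬ Function.Surjective f ∧ ¬ Function.Surjective g) ∨ f.Homotopic g := by
  have hf_norm x : ‖(f x : E)‖ = 1 := norm_eq_of_mem_sphere (f x)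
  have hg_norm x : ‖(g x : E)‖ = 1 := norm_eq_of_mem_sphere (g x)
  by_cases hA : ρ < ‖A‖
  · have hA₀ : A ≠ 0 := norm_pos_iff.mp (hρ₀.trans_lt hA)
    refine .inl ⟨not_surjective_of_forall_norm_sub_lt f hA₀ fun x => ?_,
      not_surjective_of_forall_norm_sub_lt g (neg_ne_zero.mpr hA₀) fun x => ?_⟩
    · calc ‖(f x : E) - A‖ = ‖((f x : E) - g x - A) + g x‖ := by congr 1; abel
        _ ≤ ρ + 1 := (norm_add_le _ _).trans (by rw [hg_norm]; linarith [hfg x])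
        _ < 1 + ‖A‖ := by linarith
    · calc ‖(g x : E) - -A‖ = ‖(f x : E) - ((f x : E) - g x - A)‖ := by congr 1; abel
        _ ≤ 1 + ρ := (norm_sub_le _ _).trans (by rw [hf_norm]; linarith [hfg x])
        _ < 1 + ‖-A‖ := by rw [norm_neg]; linarith
  · refine .inr (f.homotopic_of_forall_ne_neg g fun x hx => ?_)
    have hantipodal : ‖(f x : E) - g x‖ = 2 := by
      rw [hx, ← neg_add', norm_neg, ← two_smul ℝ, norm_smul, hg_norm]; norm_num
    have hclose := calc ‖(f x : E) - g x‖ = ‖((f x : E) - g x - A) + A‖ := by rw [sub_add_cancel]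
      _ ≤ ρ + ρ := (norm_add_le _ _).trans (add_le_add (hfg x) (not_lt.mp hA))
    linarith

end

/-- `r` stands for `|f - g|_{W^{s,p}}` and `A` for the average of `f - g`, so `havg` is the
embedding inequality; `deg` is any homotopy-invariant degree vanishing on non-surjective maps. -/
theorem stmt12_general (N : ℕ)
    (deg : C(Sph N, Sph N) → ℤ)
    (hdeg_htpy : ∀ f g : C(Sph N, Sph N), f.Homotopic g → deg f = deg g)
    (hdeg_surj : ∀ f : C(Sph N, Sph N), ¬ Function.Surjective f → deg f = 0)
    (f g : C(Sph N, Sph N)) (hfg : deg f ≠ deg g)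
    (C r : ℝ) (hC : 0 < C) (hr : 0 ≤ r) (A : EuclideanSpace ℝ (Fin (N + 1)))
    (havg : ∀ x : Sph N,
      ‖((f x : EuclideanSpace ℝ (Fin (N + 1))) - (g x : EuclideanSpace ℝ (Fin (N + 1)))) - A‖
        ≤ C * r) :
    1 / C ≤ r := by
  by_contra! hr₁
  have hCr : C * r < 1 := by rwa [lt_div_iff₀ hC, mul_comm] at hr₁
  rcases not_surjective_and_not_surjective_or_homotopic f g A (by positivity) hCr havg with
    ⟨hf, hg⟩ | hhtpy
  · exact hfg ((hdeg_surj f hf).trans (hdeg_surj g hg).symm)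
  · exact hfg (hdeg_htpy f g hhtpy)

/-- For `sp > N` (or `s = N`, `p = 1`), `W^{s,p}(𝕊^N;𝕊^N)` maps are continuous, and if
`C` is the constant of the embedding `‖h - avg h‖_{L^∞} ≤ C |h|_{W^{s,p}}`, then any two
maps `f, g` with `deg f ≠ deg g` satisfy `|f - g|_{W^{s,p}} ≥ 1/C`.

Here `r` denotes the seminorm `|f - g|_{W^{s,p}}` and `A` the average of `f - g`, so the
embedding inequality reads `‖(f x - g x) - A‖ ≤ C·r` for all `x`; `deg` is any
homotopy-invariant degree on continuous self-maps of `𝕊^N` vanishing on non-surjective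
maps. -/
theorem stmt12 (N : ℕ) (hN : 1 ≤ N)
    (deg : C(Sph N, Sph N) → ℤ)
    (hdeg_htpy : ∀ f g : C(Sph N, Sph N), f.Homotopic g → deg f = deg g)
    (hdeg_surj : ∀ f : C(Sph N, Sph N), ¬ Function.Surjective f → deg f = 0)
    (f g : C(Sph N, Sph N)) (hfg : deg f ≠ deg g)
    (C r : ℝ) (hC : 0 < C) (hr : 0 ≤ r) (A : EuclideanSpace ℝ (Fin (N + 1)))
    (havg : ∀ x : Sph N,
      ‖((f x : EuclideanSpace ℝ (Fin (N + 1))) - (g x : EuclideanSpace ℝ (Fin (N + 1)))) - A‖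
        ≤ C * r) :
    1 / C ≤ r :=
  stmt12_general N deg hdeg_htpy hdeg_surj f g hfg C r hC hr A havg
end
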